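/- arXiv:math-ph/0506030 — 6 statements merged into one kernel-verified Lean document; each statement's English description precedes it below -/
import Mathlib

section
/- Let A and B be bounded operators on 𝓚 with P_0 B Ω = 0. Then for every b ≥ 0, |⟨Ω, A τ_{ib}(B) Ω⟩| ≤ ‖A‖ ‖B‖ e^{−γ b}. -/
/-!
Since `H Ω = 0`, `e^{bH}` fixes `Ω`, so it suffices to show `‖e^{-bH} ψ‖ ≤ e^{-γb} ‖ψ‖` for
`ψ ⊥ ker H`. By the gap, `spec H ⊆ {0} ∪ [γ, ∞)`. If `f` vanishes on `spec H \ {0}` then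
`H f(H) = 0`, so the self-adjoint operator `f(H)` has range in `ker H` and therefore kills `ψ`.
Hence subtracting `f(0) φ(H)`, with `φ` a continuous bump equal to `1` at `0` and to `0` on
`[γ, ∞)`, does not change `f(H) ψ`, while the new function is bounded on `spec H` by
`sup_{x ≥ γ} |f x|`; for `f x = e^{-bx}` this is `e^{-γb}`.
-/

open Set

namespace ContinuousLinearMap

variable {𝕂 E : Type*} [RCLike 𝕂] [NormedAddCommGroup E] [NormedSpace 𝕂 E] [CompleteSpace E]

theorem exp_apply_of_apply_eq_zero {T : E →L[𝕂] E} {x : E} (hx : T x = 0) :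
    NormedSpace.exp T x = x := by
  have hterm : ∀ n ≠ 0, ((n.factorial⁻¹ : 𝕂) • T ^ n) x = 0 := by
    intro n hn
    obtain ⟨m, rfl⟩ := Nat.exists_eq_succ_of_ne_zero hn
    simp [pow_succ, hx]
  refine ((NormedSpace.exp_series_hasSum_exp' (𝕂 := 𝕂) T).mapL (apply 𝕂 E x)).unique ?_
  simpa using hasSum_single 0 hterm

end ContinuousLinearMap

variable {K : Type*} [NormedAddCommGroup K] [InnerProductSpace ℂ K] [CompleteSpace K]
  {H : K →L[ℂ] K}

theorem IsSelfAdjoint.cfc_apply_eq_zero_of_mem_orthogonal_ker (hH : IsSelfAdjoint H)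
    {g : ℝ → ℝ} (hg : ∀ x ∈ spectrum ℝ H, x ≠ 0 → g x = 0) {ψ : K}
    (hψ : ψ ∈ (LinearMap.ker (H : K →ₗ[ℂ] K))ᗮ) : cfc g H ψ = 0 := by
  by_cases hcont : ContinuousOn g (spectrum ℝ H)
  swap
  · rw [cfc_apply_of_not_continuousOn H hcont, zero_apply]
  have hHg : H * cfc g H = 0 :=
    calc H * cfc g H = cfc (fun x ↦ x * g x) H := by rw [cfc_mul (fun x ↦ x) g H, cfc_id' ℝ H]
      _ = cfc (0 : ℝ → ℝ) H := cfc_congr fun x hx ↦ by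
          by_cases hx0 : x = 0 <;> simp [hx0, hg x hx]
      _ = 0 := cfc_zero ℝ H
  have hrange : ∀ v, cfc g H v ∈ LinearMap.ker (H : K →ₗ[ℂ] K) := fun v ↦ by
    simpa using congr($hHg v)
  have hsymm : (cfc g H).IsSymmetric := (cfc_predicate g H).isSymmetric
  refine (inner_self_eq_zero (𝕜 := ℂ)).mp ?_
  exact (hsymm ψ _).trans (Submodule.inner_left_of_mem_orthogonal (hrange _) hψ)

theorem IsSelfAdjoint.norm_cfc_apply_le_of_mem_orthogonal_ker (hH : IsSelfAdjoint H)
    {γ : ℝ} (hγ : 0 < γ) (hspec : spectrum ℝ H ⊆ {0} ∪ Ici γ)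
    {f : ℝ → ℝ} (hf : ContinuousOn f (spectrum ℝ H)) {M : ℝ} (hM : 0 ≤ M)
    (hfM : ∀ x ∈ spectrum ℝ H, γ ≤ x → ‖f x‖ ≤ M) {ψ : K}
    (hψ : ψ ∈ (LinearMap.ker (H : K →ₗ[ℂ] K))ᗮ) : ‖cfc f H ψ‖ ≤ M * ‖ψ‖ := by
  set bump : ℝ → ℝ := fun x ↦ max (1 - x / γ) 0
  have hbump_zero : bump 0 = 1 := by simp [bump]
  have hbump_of_le : ∀ x, γ ≤ x → bump x = 0 := fun x hx ↦
    max_eq_right (sub_nonpos.mpr ((le_div_iff₀ hγ).mpr (by linarith)))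
  set g : ℝ → ℝ := fun x ↦ f x - f 0 * bump x
  have hsplit : cfc f H = cfc g H + cfc (fun x ↦ f 0 * bump x) H := by
    rw [← cfc_add H g _ (hf.sub (by fun_prop))]
    exact cfc_congr fun x _ ↦ by simp [g]
  have hbump_apply : cfc (fun x ↦ f 0 * bump x) H ψ = 0 :=
    hH.cfc_apply_eq_zero_of_mem_orthogonal_ker (fun x hx hx0 ↦ by
      simp [hbump_of_le x ((hspec hx).resolve_left hx0)]) hψ
  have hg : ‖cfc g H‖ ≤ M := norm_cfc_le hM fun x hx ↦ by
    rcases hspec hx with rfl | hx'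
    · simpa [g, hbump_zero] using hM
    · simpa [g, hbump_of_le x hx'] using hfM x hx hx'
  calc ‖cfc f H ψ‖ = ‖cfc g H ψ‖ := by
        rw [hsplit, add_apply, hbump_apply, add_zero]
    _ ≤ ‖cfc g H‖ * ‖ψ‖ := (cfc g H).le_opNorm ψ
    _ ≤ M * ‖ψ‖ := by gcongr

theorem ContinuousLinearMap.IsPositive.spectrum_subset_of_gap (hpos : H.IsPositive) {γ : ℝ}
    (hgap : ∀ r : ℝ, 0 < r → r < γ → (r : ℂ) ∉ spectrum ℂ H) :
    spectrum ℝ H ⊆ {0} ∪ Ici γ := by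
  intro x hx
  have hx0 : 0 ≤ x :=
    spectrum_nonneg_of_nonneg ((ContinuousLinearMap.nonneg_iff_isPositive H).mpr hpos) hx
  rcases hx0.eq_or_lt with rfl | hx0
  · exact Or.inl rfl
  · exact Or.inr (not_lt.mp fun hxγ ↦ hgap x hx0 hxγ (spectrum.algebraMap_mem ℂ hx))

theorem IsSelfAdjoint.exp_ofReal_smul_eq_cfc (hH : IsSelfAdjoint H) (t : ℝ) :
    NormedSpace.exp ((t : ℂ) • H) = cfc (fun x ↦ Real.exp (t * x)) H := by
  rw [Complex.coe_smul, ← CFC.real_exp_eq_normedSpace_exp, ← cfc_comp_smul t Real.exp H]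
  rfl

theorem IsSelfAdjoint.norm_exp_neg_smul_apply_le (hH : IsSelfAdjoint H) {γ : ℝ} (hγ : 0 < γ)
    (hspec : spectrum ℝ H ⊆ {0} ∪ Ici γ) {ψ : K}
    (hψ : ψ ∈ (LinearMap.ker (H : K →ₗ[ℂ] K))ᗮ) {b : ℝ} (hb : 0 ≤ b) :
    ‖NormedSpace.exp ((-b : ℂ) • H) ψ‖ ≤ Real.exp (-γ * b) * ‖ψ‖ := by
  rw [← Complex.ofReal_neg, hH.exp_ofReal_smul_eq_cfc]
  refine hH.norm_cfc_apply_le_of_mem_orthogonal_ker hγ hspec (by fun_prop) (Real.exp_nonneg _)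
    (fun x _ hx ↦ ?_) hψ
  rw [Real.norm_of_nonneg (Real.exp_nonneg _), Real.exp_le_exp]
  nlinarith

/-- For `B` with `P₀ B Ω = 0` (expressed as `B Ω ⊥ ker H`, with `P₀` the orthogonal
projection onto `ker H`) and `b ≥ 0`:
`|⟨Ω, A τ_{ib}(B) Ω⟩| ≤ ‖A‖ ‖B‖ e^{−γ b}`, where `τ_{ib}(B) = e^{−bH} B e^{bH}`. -/
theorem trivial_imaginary_time_bound
    {K : Type} [NormedAddCommGroup K] [InnerProductSpace ℂ K] [CompleteSpace K]
    (H : K →L[ℂ] K) (hpos : H.IsPositive)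
    (Ω : K) (hΩ : ‖Ω‖ = 1) (hHΩ : H Ω = 0)
    (γ : ℝ) (hγ : 0 < γ)
    (hgap : ∀ r : ℝ, 0 < r → r < γ → (r : ℂ) ∉ spectrum ℂ H)
    (A B : K →L[ℂ] K) (hBΩ : B Ω ∈ (LinearMap.ker (H : K →ₗ[ℂ] K))ᗮ)
    (b : ℝ) (hb : 0 ≤ b) :
    ‖(inner ℂ Ω
        ((A * (NormedSpace.exp ((-b : ℂ) • H) * B * NormedSpace.exp ((b : ℂ) • H))) Ω)
        : ℂ)‖ ≤ ‖A‖ * ‖B‖ * Real.exp (-γ * b) := by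
  have hexpΩ : NormedSpace.exp ((b : ℂ) • H) Ω = Ω :=
    ContinuousLinearMap.exp_apply_of_apply_eq_zero (by simp [hHΩ])
  have hdecay := hpos.isSelfAdjoint.norm_exp_neg_smul_apply_le hγ
    (hpos.spectrum_subset_of_gap hgap) hBΩ hb
  have hBΩ_norm : ‖B Ω‖ ≤ ‖B‖ := by simpa [hΩ] using B.le_opNorm Ω
  simp only [ContinuousLinearMap.mul_def, ContinuousLinearMap.comp_apply, hexpΩ]
  calc ‖(inner ℂ Ω (A (NormedSpace.exp ((-b : ℂ) • H) (B Ω))) : ℂ)‖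
      ≤ ‖A (NormedSpace.exp ((-b : ℂ) • H) (B Ω))‖ := by
        simpa [hΩ] using norm_inner_le_norm (𝕜 := ℂ) Ω _
    _ ≤ ‖A‖ * ‖NormedSpace.exp ((-b : ℂ) • H) (B Ω)‖ := A.le_opNorm _
    _ ≤ ‖A‖ * (Real.exp (-γ * b) * ‖B‖) := by gcongr; exact hdecay.trans (by gcongr)
    _ = ‖A‖ * ‖B‖ * Real.exp (-γ * b) := by ring
end

section
/- Let A and B be bounded operators on 𝓚 with P_0 B Ω = 0. Then for every T > 0 and every θ ∈ [0, π], |⟨Ω, A e^{i T e^{iθ} H} B Ω⟩| ≤ ‖A‖ ‖B‖ e^{−T γ sin θ}, where e^{i T e^{iθ} H} denotes the exponential of the bounded operator i T e^{iθ} H. -/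
/-!
The spectrum of `H` lies in `{0} ∪ [γ, ∞)`. Multiplying `x ↦ e^{zx}` by a continuous cutoff that
vanishes at `0` and equals `1` on `[γ, ∞)` gives, via the functional calculus, an operator `F`
of norm at most `e^{γ Re z}` with `F H = e^{zH} H`. So `F` and `e^{zH}` agree on the closure of the
range of `H`, which is `(ker H)ᗮ`. For `z = i T e^{iθ}` one has `Re z = -T sin θ ≤ 0`.
-/

open NormedSpace

theorem exp_smul_eq_cfc {A : Type*} [CStarAlgebra A] (a : A) [IsStarNormal a] (c : ℂ) :
    exp (c • a) = cfc (fun x ↦ Complex.exp (c * x)) a := by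
  rw [← CFC.complex_exp_eq_normedSpace_exp, ← cfc_comp_const_mul c Complex.exp a]

namespace ContinuousLinearMap

variable {E : Type*} [NormedAddCommGroup E] [InnerProductSpace ℂ E] [CompleteSpace E]

theorem apply_eq_of_mul_eq_mul_of_mem_orthogonal_ker {S T H : E →L[ℂ] E} (h : S * H = T * H)
    {v : E} (hv : v ∈ (LinearMap.ker (adjoint H : E →ₗ[ℂ] E))ᗮ) : S v = T v := by
  rw [orthogonal_ker, adjoint_adjoint] at hv
  refine sub_eq_zero.mp (Submodule.topologicalClosure_minimal _ ?_ (isClosed_ker (S - T)) hv)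
  rintro _ ⟨w, rfl⟩
  simpa [sub_eq_zero] using congr($h w)

theorem IsPositive.eq_zero_or_ge_of_mem_spectrum {H : E →L[ℂ] E} (hpos : H.IsPositive) {γ : ℝ}
    (hgap : ∀ r : ℝ, 0 < r → r < γ → (r : ℂ) ∉ spectrum ℂ H) {x : ℂ} (hx : x ∈ spectrum ℂ H) :
    x = 0 ∨ ∃ r : ℝ, γ ≤ r ∧ x = r := by
  have hsa := hpos.isSelfAdjoint
  have hxr : x = x.re := hsa.mem_spectrum_eq_re hx
  have hre : 0 ≤ x.re := spectrum_nonneg_of_nonneg ((nonneg_iff_isPositive H).mpr hpos)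
    (hsa.coe_mem_spectrum_complex.mp (hxr ▸ hx))
  rcases hre.eq_or_lt with h | h
  · exact .inl (by rw [hxr, ← h, Complex.ofReal_zero])
  · exact .inr ⟨x.re, not_lt.mp fun hlt ↦ hgap _ h hlt (hxr ▸ hx), hxr⟩

theorem IsPositive.norm_exp_smul_apply_le {H : E →L[ℂ] E} (hpos : H.IsPositive) {γ : ℝ}
    (hγ : 0 < γ) (hgap : ∀ r : ℝ, 0 < r → r < γ → (r : ℂ) ∉ spectrum ℂ H) {c : ℂ}
    (hc : c.re ≤ 0) {v : E} (hv : v ∈ (LinearMap.ker (H : E →ₗ[ℂ] E))ᗮ) :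
    ‖exp (c • H) v‖ ≤ Real.exp (c.re * γ) * ‖v‖ := by
  have hsa := hpos.isSelfAdjoint
  have := hsa.isStarNormal
  set cutoff : ℂ → ℂ := fun x ↦ (min 1 (x.re / γ) : ℝ)
  have hcutoff {r : ℝ} (hr : γ ≤ r) : cutoff r = 1 := by
    simp [cutoff, min_eq_left ((one_le_div hγ).mpr hr)]
  set F := cfc (fun x ↦ Complex.exp (c * x) * cutoff x) H
  have hF : exp (c • H) * H = F * H := by
    have h₁ := cfc_mul (fun x ↦ Complex.exp (c * x)) (fun x ↦ x) H
    have h₂ := cfc_mul (fun x ↦ Complex.exp (c * x) * cutoff x) (fun x ↦ x) H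
    rw [cfc_id' ℂ H] at h₁ h₂
    rw [exp_smul_eq_cfc, ← h₁, ← h₂]
    refine cfc_congr fun x hx ↦ ?_
    rcases hpos.eq_zero_or_ge_of_mem_spectrum hgap hx with rfl | ⟨r, hr, rfl⟩
    · simp
    · rw [hcutoff hr, mul_one]
  have hFnorm : ‖F‖ ≤ Real.exp (c.re * γ) := by
    refine norm_cfc_le (Real.exp_pos _).le fun x hx ↦ ?_
    rcases hpos.eq_zero_or_ge_of_mem_spectrum hgap hx with rfl | ⟨r, hr, rfl⟩
    · simpa [cutoff] using (Real.exp_pos _).le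
    · rw [hcutoff hr, mul_one, Complex.norm_exp, Complex.re_mul_ofReal]
      exact Real.exp_le_exp.mpr (mul_le_mul_of_nonpos_left hr hc)
  rw [apply_eq_of_mul_eq_mul_of_mem_orthogonal_ker hF (by rwa [hsa.adjoint_eq])]
  exact (F.le_opNorm v).trans (by gcongr)

end ContinuousLinearMap

theorem Complex.re_I_mul_ofReal_mul_exp_I_mul (T θ : ℝ) :
    (Complex.I * T * Complex.exp (Complex.I * θ)).re = -(T * Real.sin θ) := by
  rw [mul_comm Complex.I (θ : ℂ), Complex.exp_mul_I]
  simp [Complex.sin_ofReal_re]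

theorem semicircle_contour_bound_general
    {K : Type} [NormedAddCommGroup K] [InnerProductSpace ℂ K] [CompleteSpace K]
    (H : K →L[ℂ] K) (hpos : H.IsPositive)
    (Ω : K) (hΩ : ‖Ω‖ = 1)
    (γ : ℝ) (hγ : 0 < γ)
    (hgap : ∀ r : ℝ, 0 < r → r < γ → (r : ℂ) ∉ spectrum ℂ H)
    (A B : K →L[ℂ] K) (hBΩ : B Ω ∈ (LinearMap.ker (H : K →ₗ[ℂ] K))ᗮ)
    (T : ℝ) (hT : 0 < T) (θ : ℝ) (hθ : θ ∈ Set.Icc 0 Real.pi) :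
    ‖(inner ℂ Ω
        ((A * NormedSpace.exp ((Complex.I * T * Complex.exp (Complex.I * θ)) • H) * B) Ω)
        : ℂ)‖ ≤ ‖A‖ * ‖B‖ * Real.exp (-(T * γ * Real.sin θ)) := by
  set z := Complex.I * T * Complex.exp (Complex.I * θ)
  have hz : z.re = -(T * Real.sin θ) := Complex.re_I_mul_ofReal_mul_exp_I_mul T θ
  have hTsin : 0 ≤ T * Real.sin θ :=
    mul_nonneg hT.le (Real.sin_nonneg_of_nonneg_of_le_pi hθ.1 hθ.2)
  have hdecay := hpos.norm_exp_smul_apply_le hγ hgap (c := z) (by linarith) hBΩ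
  calc ‖(inner ℂ Ω ((A * exp (z • H) * B) Ω) : ℂ)‖
      ≤ ‖A (exp (z • H) (B Ω))‖ := by simpa [hΩ] using norm_inner_le_norm Ω _
    _ ≤ ‖A‖ * (Real.exp (z.re * γ) * ‖B Ω‖) := A.le_opNorm_of_le hdecay
    _ ≤ ‖A‖ * (Real.exp (z.re * γ) * ‖B‖) := by
      gcongr
      simpa [hΩ] using B.le_opNorm Ω
    _ = ‖A‖ * ‖B‖ * Real.exp (-(T * γ * Real.sin θ)) := by
      rw [hz]
      ring_nf

/-- For `B` with `P₀ B Ω = 0` (expressed as `B Ω ⊥ ker H`), `T > 0` and `θ ∈ [0, π]`: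
`|⟨Ω, A e^{i T e^{iθ} H} B Ω⟩| ≤ ‖A‖ ‖B‖ e^{−T γ sin θ}`. -/
theorem semicircle_contour_bound
    {K : Type} [NormedAddCommGroup K] [InnerProductSpace ℂ K] [CompleteSpace K]
    (H : K →L[ℂ] K) (hpos : H.IsPositive)
    (Ω : K) (hΩ : ‖Ω‖ = 1) (hHΩ : H Ω = 0)
    (γ : ℝ) (hγ : 0 < γ)
    (hgap : ∀ r : ℝ, 0 < r → r < γ → (r : ℂ) ∉ spectrum ℂ H)
    (A B : K →L[ℂ] K) (hBΩ : B Ω ∈ (LinearMap.ker (H : K →ₗ[ℂ] K))ᗮ)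
    (T : ℝ) (hT : 0 < T) (θ : ℝ) (hθ : θ ∈ Set.Icc 0 Real.pi) :
    ‖(inner ℂ Ω
        ((A * NormedSpace.exp ((Complex.I * T * Complex.exp (Complex.I * θ)) • H) * B) Ω)
        : ℂ)‖ ≤ ‖A‖ * ‖B‖ * Real.exp (-(T * γ * Real.sin θ)) :=
  semicircle_contour_bound_general H hpos Ω hΩ γ hγ hgap A B hBΩ T hT θ hθ
end

section
/- For z ∈ ℂ with Im z > 0, T > 0 and w ∈ ℝ, define F_{z,T}(w) = (1/(2πi)) ∫_{−T}^{T} e^{iwt}/(t − z) dt. Then for every w > 0 and every T with 0 < 2|z| < T, |F_{z,T}(w) − e^{iwz}| ≤ (2/π) [ (1 − e^{−wT})/(wT) + e^{−wT} ]. -/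
/-!
Close the segment `[-T, T]` by the rectangle with corners `-T` and `T + iT`, which contains `z`
because `|z| < T / 2`. The Cauchy integral formula on this rectangle (write
`e^{iwζ} / (ζ - z)` as the entire difference quotient plus `e^{iwz} / (ζ - z)`, whose boundary
integral is `2πi`) turns `∫_{-T}^{T} - 2πi e^{iwz}` into the integrals over the other three sides.
There `|ζ - z| ≥ T / 2` and `|e^{iwζ}| = e^{-w Im ζ}`, so the top side contributes at most
`4 e^{-wT}` and each vertical side at most `2 (1 - e^{-wT}) / (wT)`.
-/

open Complex Set intervalIntegral
open scoped Interval

namespace Complex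

variable {E : Type*} [NormedAddCommGroup E] [NormedSpace ℂ E] {z w z₀ : ℂ}

/-- Counterclockwise when `z.re ≤ w.re` and `z.im ≤ w.im`; this is the expression of
`integral_boundary_rect_eq_zero_of_differentiableOn`. -/
noncomputable def rectBoundaryIntegral (f : ℂ → E) (z w : ℂ) : E :=
  (∫ x : ℝ in z.re..w.re, f (x + z.im * I)) - (∫ x : ℝ in z.re..w.re, f (x + w.im * I)) +
    I • (∫ y : ℝ in z.im..w.im, f (w.re + y * I)) - I • ∫ y : ℝ in z.im..w.im, f (z.re + y * I)

theorem rectBoundaryIntegral_eq_zero_of_differentiableOn {f : ℂ → E}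
    (hf : DifferentiableOn ℂ f ([[z.re, w.re]] ×ℂ [[z.im, w.im]])) :
    rectBoundaryIntegral f z w = 0 :=
  integral_boundary_rect_eq_zero_of_differentiableOn f z w hf

theorem mapsTo_rect_edges (hz₀ : z₀ ∈ Ioo z.re w.re ×ℂ Ioo z.im w.im) :
    let R := [[z.re, w.re]] ×ℂ [[z.im, w.im]] \ {z₀}
    MapsTo (fun x : ℝ => (x : ℂ) + z.im * I) [[z.re, w.re]] R ∧
    MapsTo (fun x : ℝ => (x : ℂ) + w.im * I) [[z.re, w.re]] R ∧
    MapsTo (fun y : ℝ => (w.re : ℂ) + y * I) [[z.im, w.im]] R ∧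
    MapsTo (fun y : ℝ => (z.re : ℂ) + y * I) [[z.im, w.im]] R := by
  obtain ⟨⟨hre₁, hre₂⟩, ⟨him₁, him₂⟩⟩ := hz₀
  refine ⟨fun x hx => ⟨?_, ?_⟩, fun x hx => ⟨?_, ?_⟩, fun y hy => ⟨?_, ?_⟩,
    fun y hy => ⟨?_, ?_⟩⟩ <;> simp_all [mem_reProdIm, Complex.ext_iff] <;> intros <;> linarith

theorem rectBoundaryIntegral_congr {f g : ℂ → E}
    (hz₀ : z₀ ∈ Ioo z.re w.re ×ℂ Ioo z.im w.im)
    (hfg : EqOn f g ([[z.re, w.re]] ×ℂ [[z.im, w.im]] \ {z₀})) :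
    rectBoundaryIntegral f z w = rectBoundaryIntegral g z w := by
  obtain ⟨hB, hT, hR, hL⟩ := mapsTo_rect_edges hz₀
  unfold rectBoundaryIntegral
  rw [integral_congr fun x hx => hfg (hB hx), integral_congr fun x hx => hfg (hT hx),
    integral_congr fun y hy => hfg (hR hy), integral_congr fun y hy => hfg (hL hy)]

theorem rectBoundaryIntegral_add {f g : ℂ → E}
    (hz₀ : z₀ ∈ Ioo z.re w.re ×ℂ Ioo z.im w.im)
    (hf : ContinuousOn f ([[z.re, w.re]] ×ℂ [[z.im, w.im]] \ {z₀}))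
    (hg : ContinuousOn g ([[z.re, w.re]] ×ℂ [[z.im, w.im]] \ {z₀})) :
    rectBoundaryIntegral (f + g) z w = rectBoundaryIntegral f z w + rectBoundaryIntegral g z w := by
  obtain ⟨hB, hT, hR, hL⟩ := mapsTo_rect_edges hz₀
  have edge {φ : ℝ → ℂ} {a b : ℝ} {h : ℂ → E} {S : Set ℂ} (hh : ContinuousOn h S)
      (hφ : Continuous φ) (hmaps : MapsTo φ [[a, b]] S) :
      IntervalIntegrable (fun t => h (φ t)) MeasureTheory.volume a b :=
    (hh.comp hφ.continuousOn hmaps).intervalIntegrable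
  unfold rectBoundaryIntegral
  simp only [Pi.add_apply]
  rw [integral_add (edge hf (by fun_prop) hB) (edge hg (by fun_prop) hB),
    integral_add (edge hf (by fun_prop) hT) (edge hg (by fun_prop) hT),
    integral_add (edge hf (by fun_prop) hR) (edge hg (by fun_prop) hR),
    integral_add (edge hf (by fun_prop) hL) (edge hg (by fun_prop) hL), smul_add, smul_add]
  abel

theorem rectBoundaryIntegral_smul_const [CompleteSpace E] (f : ℂ → ℂ) (v : E) (z w : ℂ) :
    rectBoundaryIntegral (fun ζ => f ζ • v) z w = rectBoundaryIntegral f z w • v := by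
  simp only [rectBoundaryIntegral, intervalIntegral.integral_smul_const, sub_smul, add_smul,
    smul_assoc]

theorem log_neg_of_im_pos {u : ℂ} (hu : 0 < u.im) : log (-u) = log u - Real.pi * I := by
  apply Complex.ext <;> simp [log_re, log_im, arg_neg_eq_arg_sub_pi_of_im_pos hu]

theorem log_neg_of_im_neg {u : ℂ} (hu : u.im < 0) : log (-u) = log u + Real.pi * I := by
  apply Complex.ext <;> simp [log_re, log_im, arg_neg_eq_arg_add_pi_of_im_neg hu]

theorem integral_inv_eq_log_sub {u : ℝ → ℂ} {u' : ℂ} {a b : ℝ} (hu : ∀ t, HasDerivAt u u' t)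
    (hu' : u' ≠ 0) (hslit : ∀ t ∈ [[a, b]], u t ∈ slitPlane) :
    ∫ t in a..b, (u t)⁻¹ = u'⁻¹ * (log (u b) - log (u a)) := by
  have hderiv : ∀ t ∈ [[a, b]], HasDerivAt (fun t => u'⁻¹ * log (u t)) (u t)⁻¹ t := fun t ht => by
    simpa [mul_div_assoc', inv_mul_cancel₀ hu'] using
      ((hu t).clog_real (hslit t ht)).const_mul u'⁻¹
  have hcont : ContinuousOn (fun t => (u t)⁻¹) [[a, b]] :=
    (continuous_iff_continuousAt.2 fun t => (hu t).continuousAt).continuousOn.inv₀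
      fun t ht => slitPlane_ne_zero (hslit t ht)
  rw [integral_eq_sub_of_hasDerivAt hderiv hcont.intervalIntegrable, mul_sub]

theorem integral_horizontal_inv_sub {a b y : ℝ} (hy : y ≠ z₀.im) :
    ∫ x : ℝ in a..b, ((x : ℂ) + y * I - z₀)⁻¹ =
      log (b + y * I - z₀) - log (a + y * I - z₀) := by
  simpa using integral_inv_eq_log_sub (u := fun x : ℝ => (x : ℂ) + y * I - z₀) (u' := 1)
    (a := a) (b := b)
    (fun t => by simpa using ((hasDerivAt_id t).ofReal_comp.add_const (y * I : ℂ)).sub_const z₀)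
    one_ne_zero fun t _ => mem_slitPlane_iff.2 (Or.inr (by simpa [sub_eq_zero] using hy))

theorem integral_vertical_inv_sub_of_re_lt {x c d : ℝ} (hx : z₀.re < x) :
    ∫ y : ℝ in c..d, ((x : ℂ) + y * I - z₀)⁻¹ =
      -I * (log (x + d * I - z₀) - log (x + c * I - z₀)) := by
  simpa using integral_inv_eq_log_sub (u := fun y : ℝ => (x : ℂ) + y * I - z₀) (u' := I)
    (a := c) (b := d)
    (fun t => by
      simpa using (((hasDerivAt_id t).ofReal_comp.mul_const I).const_add (x : ℂ)).sub_const z₀)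
    I_ne_zero fun t _ => mem_slitPlane_iff.2 (Or.inl (by simpa using hx))

/-- Here `ζ - z₀` crosses the branch cut of `log`, so the primitive is taken through
`z₀ - ζ` instead. -/
theorem integral_vertical_inv_sub_of_lt_re {x c d : ℝ} (hx : x < z₀.re) :
    ∫ y : ℝ in c..d, ((x : ℂ) + y * I - z₀)⁻¹ =
      -I * (log (z₀ - x - d * I) - log (z₀ - x - c * I)) := by
  have hneg : (fun y : ℝ => ((x : ℂ) + y * I - z₀)⁻¹) = fun y : ℝ => -(z₀ - x - y * I)⁻¹ := by
    funext y
    rw [← inv_neg]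
    ring
  rw [hneg, integral_neg, integral_inv_eq_log_sub (u' := -I)
    (fun t => by simpa using ((hasDerivAt_id t).ofReal_comp.mul_const I).const_sub (z₀ - x))
    (neg_ne_zero.2 I_ne_zero) fun t _ => mem_slitPlane_iff.2 (Or.inl (by simpa using hx)),
    inv_neg, inv_I]
  ring

/-- The `2πi` is the jump of `log` across its cut at the two left corners. -/
theorem rectBoundaryIntegral_sub_inv (hz₀ : z₀ ∈ Ioo z.re w.re ×ℂ Ioo z.im w.im) :
    rectBoundaryIntegral (fun ζ => (ζ - z₀)⁻¹) z w = 2 * Real.pi * I := by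
  obtain ⟨⟨hre₁, hre₂⟩, ⟨him₁, him₂⟩⟩ := hz₀
  have lower_left : log (z.re + z.im * I - z₀) = log (z₀ - z.re - z.im * I) - Real.pi * I := by
    rw [← log_neg_of_im_pos (by simpa using him₁)]
    ring_nf
  have upper_left : log (z.re + w.im * I - z₀) = log (z₀ - z.re - w.im * I) + Real.pi * I := by
    rw [← log_neg_of_im_neg (by simpa using him₂)]
    ring_nf
  simp only [rectBoundaryIntegral, integral_horizontal_inv_sub him₁.ne,
    integral_horizontal_inv_sub him₂.ne', integral_vertical_inv_sub_of_re_lt hre₂,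
    integral_vertical_inv_sub_of_lt_re hre₁, lower_left, upper_left, smul_eq_mul]
  linear_combination (log (w.re + z.im * I - z₀) - log (w.re + w.im * I - z₀)
    + log (z₀ - z.re - w.im * I) - log (z₀ - z.re - z.im * I)) * I_sq

theorem rectBoundaryIntegral_inv_smul [CompleteSpace E] {h : ℂ → E}
    (hh : DifferentiableOn ℂ h ([[z.re, w.re]] ×ℂ [[z.im, w.im]]))
    (hz₀ : z₀ ∈ Ioo z.re w.re ×ℂ Ioo z.im w.im) :
    rectBoundaryIntegral (fun ζ => (ζ - z₀)⁻¹ • h ζ) z w = (2 * Real.pi * I) • h z₀ := by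
  have hnhds : [[z.re, w.re]] ×ℂ [[z.im, w.im]] ∈ nhds z₀ :=
    Filter.mem_of_superset ((isOpen_Ioo.reProdIm isOpen_Ioo).mem_nhds hz₀)
      (reProdIm_subset_iff.2 (prod_mono (Ioo_subset_Icc_self.trans Icc_subset_uIcc)
        (Ioo_subset_Icc_self.trans Icc_subset_uIcc)))
  have hslope : DifferentiableOn ℂ (dslope h z₀) ([[z.re, w.re]] ×ℂ [[z.im, w.im]]) :=
    (differentiableOn_dslope hnhds).2 hh
  have hpole :
      ContinuousOn (fun ζ => (ζ - z₀)⁻¹ • h z₀) ([[z.re, w.re]] ×ℂ [[z.im, w.im]] \ {z₀}) :=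
    ((continuous_id.sub continuous_const).continuousOn.inv₀
      fun ζ hζ => sub_ne_zero.2 hζ.2).smul continuousOn_const
  calc rectBoundaryIntegral (fun ζ => (ζ - z₀)⁻¹ • h ζ) z w
      = rectBoundaryIntegral (dslope h z₀ + fun ζ => (ζ - z₀)⁻¹ • h z₀) z w :=
        rectBoundaryIntegral_congr hz₀ fun ζ hζ => by
          simp [dslope_of_ne _ hζ.2, slope_def_module, smul_sub]
    _ = rectBoundaryIntegral (dslope h z₀) z w +
          rectBoundaryIntegral (fun ζ => (ζ - z₀)⁻¹ • h z₀) z w :=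
        rectBoundaryIntegral_add hz₀ (hslope.continuousOn.mono sdiff_subset) hpole
    _ = (2 * Real.pi * I) • h z₀ := by
        rw [rectBoundaryIntegral_eq_zero_of_differentiableOn hslope,
          rectBoundaryIntegral_smul_const, rectBoundaryIntegral_sub_inv hz₀, zero_add]

end Complex

theorem integral_exp_neg_mul {w : ℝ} (hw : w ≠ 0) (T : ℝ) :
    ∫ y in (0 : ℝ)..T, Real.exp (-(w * y)) = (1 - Real.exp (-(w * T))) / w := by
  have := integral_comp_mul_left (a := 0) (b := T) (fun y => Real.exp y) (neg_ne_zero.2 hw)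
  simp only [neg_mul, mul_zero, integral_exp, Real.exp_zero, smul_eq_mul] at this
  rw [this]
  field_simp
  ring

theorem norm_cexp_I_mul_div_sub_le {z ζ : ℂ} {w T : ℝ} (hT : 0 < T) (hz : 2 * ‖z‖ ≤ T)
    (hζ : T ≤ ‖ζ‖) :
    ‖cexp (I * w * ζ) / (ζ - z)‖ ≤ 2 / T * Real.exp (-(w * ζ.im)) := by
  have hdist : T / 2 ≤ ‖ζ - z‖ := by linarith [norm_sub_norm_le ζ z]
  have hre : (I * w * ζ).re = -(w * ζ.im) := by simp
  calc ‖cexp (I * w * ζ) / (ζ - z)‖ = Real.exp (-(w * ζ.im)) / ‖ζ - z‖ := by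
        rw [norm_div, norm_exp, hre]
    _ ≤ Real.exp (-(w * ζ.im)) / (T / 2) := by gcongr
    _ = 2 / T * Real.exp (-(w * ζ.im)) := by ring

theorem norm_integral_cexp_div_sub_top_le {z : ℂ} {w T : ℝ} (hT : 0 < T) (hz : 2 * ‖z‖ ≤ T) :
    ‖∫ x in (-T)..T, cexp (I * w * (x + T * I)) / (x + T * I - z)‖ ≤
      4 * Real.exp (-(w * T)) := by
  have hbound : ∀ x ∈ Ι (-T) T,
      ‖cexp (I * w * (x + T * I)) / (x + T * I - z)‖ ≤ 2 / T * Real.exp (-(w * T)) := by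
    intro x _
    have hT_le : T ≤ ‖(x : ℂ) + T * I‖ := by
      simpa [abs_of_pos hT] using abs_im_le_norm ((x : ℂ) + T * I)
    simpa using norm_cexp_I_mul_div_sub_le hT hz hT_le
  calc _ ≤ 2 / T * Real.exp (-(w * T)) * |T - -T| := norm_integral_le_of_norm_le_const hbound
    _ = 4 * Real.exp (-(w * T)) := by
        rw [abs_of_pos (by linarith)]
        field_simp
        ring

theorem norm_integral_cexp_div_sub_side_le {z : ℂ} {w T s : ℝ} (hw : 0 < w) (hT : 0 < T)
    (hz : 2 * ‖z‖ ≤ T) (hs : |s| = T) :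
    ‖∫ y in (0 : ℝ)..T, cexp (I * w * (s + y * I)) / (s + y * I - z)‖ ≤
      2 * (1 - Real.exp (-(w * T))) / (w * T) := by
  have hbound : ∀ y ∈ Ioc 0 T,
      ‖cexp (I * w * (s + y * I)) / (s + y * I - z)‖ ≤ 2 / T * Real.exp (-(w * y)) := by
    intro y _
    have hT_le : T ≤ ‖(s : ℂ) + y * I‖ := by
      simpa [hs] using abs_re_le_norm ((s : ℂ) + y * I)
    simpa using norm_cexp_I_mul_div_sub_le hT hz hT_le
  calc _ ≤ ∫ y in (0 : ℝ)..T, 2 / T * Real.exp (-(w * y)) :=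
        norm_integral_le_of_norm_le hT.le (MeasureTheory.ae_of_all _ hbound)
          (Continuous.intervalIntegrable (by fun_prop) _ _)
    _ = 2 * (1 - Real.exp (-(w * T))) / (w * T) := by
        rw [integral_const_mul, integral_exp_neg_mul hw.ne']
        field_simp

theorem integral_cexp_div_sub_sub_eq {z : ℂ} {w T : ℝ} (hz : z ∈ Ioo (-T) T ×ℂ Ioo 0 T) :
    (∫ t in (-T)..T, cexp (I * w * t) / (t - z)) - 2 * Real.pi * I * cexp (I * w * z) =
      (∫ x in (-T)..T, cexp (I * w * (x + T * I)) / (x + T * I - z)) -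
        I * (∫ y in (0 : ℝ)..T, cexp (I * w * (T + y * I)) / (T + y * I - z)) +
        I * ∫ y in (0 : ℝ)..T, cexp (I * w * (-T + y * I)) / (-T + y * I - z) := by
  have hcauchy := rectBoundaryIntegral_inv_smul (h := fun ζ => cexp (I * w * ζ))
    (z := ⟨-T, 0⟩) (w := ⟨T, T⟩) (by fun_prop) hz
  simp only [rectBoundaryIntegral, smul_eq_mul, inv_mul_eq_div, ofReal_zero, zero_mul, add_zero,
    ofReal_neg] at hcauchy
  linear_combination hcauchy

theorem norm_sub_I_mul_add_I_mul_le (a b c : ℂ) : ‖a - I * b + I * c‖ ≤ ‖a‖ + ‖b‖ + ‖c‖ := by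
  have := norm_add_le (a - I * b) (I * c)
  have := norm_sub_le a (I * b)
  simp only [norm_mul, norm_I, one_mul] at *
  linarith

/-- For `w > 0` and `0 < 2|z| < T`, with `F_{z,T}(w) = (1/2πi)∫_{−T}^{T} e^{iwt}/(t−z) dt`:
`|F_{z,T}(w) − e^{iwz}| ≤ (2/π)[(1 − e^{−wT})/(wT) + e^{−wT}]`. -/
theorem F_bound_pos (z : ℂ) (hz : 0 < z.im) (T w : ℝ) (hw : 0 < w)
    (hT : 2 * ‖z‖ < T) :
    ‖(1 / (2 * Real.pi * Complex.I)) *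
        (∫ t in (-T)..T, Complex.exp (Complex.I * w * t) / (t - z)) -
      Complex.exp (Complex.I * w * z)‖ ≤
    2 / Real.pi * ((1 - Real.exp (-(w * T))) / (w * T) + Real.exp (-(w * T))) := by
  have hzT : ‖z‖ < T := by linarith [norm_nonneg z]
  have hT₀ : 0 < T := (norm_nonneg z).trans_lt hzT
  have hz₀ : z ∈ Ioo (-T) T ×ℂ Ioo 0 T :=
    ⟨abs_lt.1 ((abs_re_le_norm z).trans_lt hzT), hz, (abs_lt.1 ((abs_im_le_norm z).trans_lt hzT)).2⟩
  have htop := norm_integral_cexp_div_sub_top_le (w := w) hT₀ hT.le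
  have hright := norm_integral_cexp_div_sub_side_le (s := T) hw hT₀ hT.le (abs_of_pos hT₀)
  have hleft := norm_integral_cexp_div_sub_side_le (s := -T) hw hT₀ hT.le (by simp [abs_of_pos hT₀])
  push_cast at hleft
  have hcontour := integral_cexp_div_sub_sub_eq (w := w) hz₀
  set A := ∫ t in (-T)..T, cexp (I * w * t) / (t - z)
  calc _ = ‖(2 * Real.pi * I)⁻¹ * (A - 2 * Real.pi * I * cexp (I * w * z))‖ := by
        congr 1
        field_simp
    _ = (2 * Real.pi)⁻¹ * ‖A - 2 * Real.pi * I * cexp (I * w * z)‖ := by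
        simp [abs_of_pos Real.pi_pos]
    _ ≤ (2 * Real.pi)⁻¹ * (4 * Real.exp (-(w * T)) + 2 * (1 - Real.exp (-(w * T))) / (w * T) +
          2 * (1 - Real.exp (-(w * T))) / (w * T)) := by
        rw [hcontour]
        gcongr
        exact (norm_sub_I_mul_add_I_mul_le _ _ _).trans (by linarith)
    _ = _ := by
        field_simp
        ring
end

section
/- For z ∈ ℂ with Im z > 0, T > 0 and w ∈ ℝ, define F_{z,T}(w) = (1/(2πi)) ∫_{−T}^{T} e^{iwt}/(t − z) dt. Then for every w < 0 and every T with 0 < 2|z| < T, |F_{z,T}(w)| ≤ (2/π) [ (1 − e^{−|w|T})/(|w|T) + e^{−|w|T} ]. -/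
open Complex MeasureTheory Set intervalIntegral
open scoped Interval

/-!
Since `Im z > 0`, the integrand `e^{iwζ}/(ζ - z)` is holomorphic on the rectangle
`[-T, T] × [-T, 0]`, so by Cauchy's theorem the integral over `[-T, T]` equals the integral over
the other three sides. There `|ζ| ≥ T > 2|z|`, hence `|ζ - z| ≥ T/2`, and `|e^{iwζ}| = e^{-w Im ζ}`
decays downwards because `w < 0`: the bottom side contributes at most `4e^{-|w|T}` and each
vertical side at most `2(1 - e^{-|w|T})/(|w|T)`.
-/

theorem intervalIntegral_eq_lower_rect_boundary {f : ℂ → ℂ} {a b h : ℝ}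
    (hf : DifferentiableOn ℂ f ([[a, b]] ×ℂ [[-h, 0]])) :
    ∫ x in a..b, f x = (∫ x in a..b, f (x - h * I)) + I * (∫ y in (-h)..0, f (b + y * I)) -
      I * ∫ y in (-h)..0, f (a + y * I) := by
  have hrect := integral_boundary_rect_eq_zero_of_differentiableOn f ⟨a, -h⟩ ⟨b, 0⟩ hf
  simp only [ofReal_neg, neg_mul, ← sub_eq_add_neg, ofReal_zero, zero_mul, add_zero,
    smul_eq_mul] at hrect
  linear_combination -hrect

noncomputable def fourierCauchyKernel (w : ℝ) (z ζ : ℂ) : ℂ := cexp (I * w * ζ) / (ζ - z)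

namespace fourierCauchyKernel

theorem differentiableOn (w : ℝ) (z : ℂ) : DifferentiableOn ℂ (fourierCauchyKernel w z) {z}ᶜ :=
  fun _ hζ => ((differentiableAt_id.const_mul _).cexp.div (differentiableAt_id.sub_const z)
    (sub_ne_zero.mpr hζ)).differentiableWithinAt

variable {z : ℂ} {T : ℝ} (w : ℝ)

theorem norm_le (hzT : 2 * ‖z‖ < T) {ζ : ℂ} (hζ : T ≤ ‖ζ‖) :
    ‖fourierCauchyKernel w z ζ‖ ≤ 2 / T * Real.exp (-(w * ζ.im)) := by
  have hT : 0 < T := by linarith [norm_nonneg z]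
  have hdist : T / 2 ≤ ‖ζ - z‖ := by linarith [norm_sub_norm_le ζ z]
  have hexp : ‖cexp (I * w * ζ)‖ = Real.exp (-(w * ζ.im)) := by
    rw [norm_exp, mul_assoc, I_mul_re, im_ofReal_mul]
  calc ‖fourierCauchyKernel w z ζ‖ = Real.exp (-(w * ζ.im)) / ‖ζ - z‖ := by
        rw [fourierCauchyKernel, norm_div, hexp]
    _ ≤ Real.exp (-(w * ζ.im)) / (T / 2) := by gcongr
    _ = 2 / T * Real.exp (-(w * ζ.im)) := by ring

theorem norm_integral_lower_edge_le (hzT : 2 * ‖z‖ < T) :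
    ‖∫ x in (-T)..T, fourierCauchyKernel w z (x - T * I)‖ ≤ 4 * Real.exp (w * T) := by
  have hT : 0 < T := by linarith [norm_nonneg z]
  have hbound (x : ℝ) : ‖fourierCauchyKernel w z (x - T * I)‖ ≤ 2 / T * Real.exp (w * T) := by
    have hζ : T ≤ ‖(x - T * I : ℂ)‖ := by
      simpa [abs_of_pos hT] using abs_im_le_norm (x - T * I : ℂ)
    simpa using norm_le w hzT hζ
  calc ‖∫ x in (-T)..T, fourierCauchyKernel w z (x - T * I)‖
      ≤ 2 / T * Real.exp (w * T) * |T - -T| :=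
        norm_integral_le_of_norm_le_const fun x _ => hbound x
    _ = 4 * Real.exp (w * T) := by
        rw [abs_of_pos (by linarith)]
        field_simp
        ring

theorem norm_integral_vertical_edge_le (hw : w ≠ 0) (hzT : 2 * ‖z‖ < T) {c : ℝ} (hc : |c| = T) :
    ‖∫ y in (-T)..0, fourierCauchyKernel w z (c + y * I)‖ ≤
      2 * ((1 - Real.exp (w * T)) / (-(w * T))) := by
  have hT : 0 < T := by linarith [norm_nonneg z]
  have hbound (y : ℝ) :
      ‖fourierCauchyKernel w z (c + y * I)‖ ≤ 2 / T * Real.exp (-w * y) := by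
    have hζ : T ≤ ‖(c + y * I : ℂ)‖ := by simpa [hc] using abs_re_le_norm (c + y * I : ℂ)
    simpa using norm_le w hzT hζ
  have hintegral : ∫ y in (-T)..0, 2 / T * Real.exp (-w * y) =
      2 * ((1 - Real.exp (w * T)) / (-(w * T))) := by
    rw [intervalIntegral.integral_const_mul, integral_comp_mul_left Real.exp (neg_ne_zero.mpr hw),
      integral_exp, mul_zero, Real.exp_zero, neg_mul_neg, smul_eq_mul]
    field_simp
  calc ‖∫ y in (-T)..0, fourierCauchyKernel w z (c + y * I)‖
      ≤ ∫ y in (-T)..0, 2 / T * Real.exp (-w * y) :=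
        norm_integral_le_of_norm_le (by linarith) (ae_of_all _ fun y _ => hbound y)
          ((by fun_prop : Continuous _).intervalIntegrable _ _)
    _ = _ := hintegral

end fourierCauchyKernel

/-- For `w < 0` and `0 < 2|z| < T`, with `F_{z,T}(w) = (1/2πi)∫_{−T}^{T} e^{iwt}/(t−z) dt`:
`|F_{z,T}(w)| ≤ (2/π)[(1 − e^{−|w|T})/(|w|T) + e^{−|w|T}]`. -/
theorem F_bound_neg (z : ℂ) (hz : 0 < z.im) (T w : ℝ) (hw : w < 0)
    (hT : 2 * ‖z‖ < T) :
    ‖(1 / (2 * Real.pi * Complex.I)) *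
        ∫ t in (-T)..T, Complex.exp (Complex.I * w * t) / (t - z)‖ ≤
    2 / Real.pi * ((1 - Real.exp (-(|w| * T))) / (|w| * T) + Real.exp (-(|w| * T))) := by
  have hT₀ : 0 < T := by linarith [norm_nonneg z]
  have hK : DifferentiableOn ℂ (fourierCauchyKernel w z) ([[-T, T]] ×ℂ [[-T, 0]]) :=
    (fourierCauchyKernel.differentiableOn w z).mono fun ζ hζ (hζz : ζ = z) => by
      have hζim : ζ.im ≤ 0 := (uIcc_of_le (by linarith : -T ≤ 0) ▸ hζ.2).2
      linarith [hζz ▸ hζim]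
  have hlower := fourierCauchyKernel.norm_integral_lower_edge_le w hT
  have hright := fourierCauchyKernel.norm_integral_vertical_edge_le w hw.ne hT (abs_of_pos hT₀)
  have hleft := fourierCauchyKernel.norm_integral_vertical_edge_le w hw.ne hT
    (by rw [abs_neg, abs_of_pos hT₀] : |-T| = T)
  have hF : ‖∫ t in (-T)..T, fourierCauchyKernel w z t‖ ≤
      4 * Real.exp (w * T) + 4 * ((1 - Real.exp (w * T)) / (-(w * T))) := by
    rw [intervalIntegral_eq_lower_rect_boundary hK]
    refine (norm_sub_le_of_le (norm_add_le _ _) le_rfl).trans ?_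
    simp only [norm_mul, norm_I, one_mul]
    linarith
  have hprefactor : ‖1 / (2 * (Real.pi : ℂ) * I)‖ = 1 / (2 * Real.pi) := by
    simp [abs_of_pos Real.pi_pos]
  rw [norm_mul, hprefactor, abs_of_neg hw, neg_mul, neg_neg]
  calc 1 / (2 * Real.pi) * ‖∫ t in (-T)..T, fourierCauchyKernel w z t‖
      ≤ 1 / (2 * Real.pi) *
          (4 * Real.exp (w * T) + 4 * ((1 - Real.exp (w * T)) / (-(w * T)))) := by gcongr
    _ = _ := by ring
end

section
/- Let (V,d) be a finite metric space, λ > 0, K ≥ 0, and let ε : V × V → [0,∞) satisfy Σ_{y∈V} e^{λ d(x,y)} ε(x,y) ≤ K for every x ∈ V. Suppose C : V × [0,∞) → [0,∞) is bounded, continuous in its second variable, and satisfies the integral inequality C(x,t) ≤ C(x,0) + 2 ∫_0^t Σ_{y∈V} ε(x,y) C(y,s) ds for all x ∈ V and t ≥ 0. Then for all x ∈ V and t ≥ 0, C(x,t) ≤ e^{2tK} C(x,0) + Σ_{y∈V, y≠x} e^{−λ d(x,y)} (e^{2tK} − 1) C(y,0). -/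
/-!
Weight the sites by `e^{-λ d(x,·)}` and let `H(s) = max_y e^{-λ d(x,y)} C(y,s)`. The triangle
inequality gives `e^{-λ d(x,z)} ≤ e^{λ d(z,y)} e^{-λ d(x,y)}`, so the hypothesis on `ε` turns
`e^{-λ d(x,z)} ∑_y ε(z,y) C(y,s)` into at most `K H(s)`. Multiplying the integral inequality at
`z` by `e^{-λ d(x,z)}` and maximising over `z` yields `H(u) ≤ H(0) + 2K ∫_0^u H`, whence
`2K ∫_0^t H ≤ H(0) (e^{2tK} - 1)` by Grönwall. The integral inequality at `x` itself then gives
`C(x,t) ≤ C(x,0) + H(0) (e^{2tK} - 1)`, and `H(0)` is at most the weighted sum of the `C(y,0)`.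
-/

open MeasureTheory Set Real

theorem mul_gronwallBound_zero (K ε x : ℝ) :
    K * gronwallBound 0 K ε x = ε * (exp (K * x) - 1) := by
  rcases eq_or_ne K 0 with rfl | hK
  · simp
  · rw [gronwallBound_of_K_ne_0 hK]
    field_simp
    ring

theorem mul_integral_le_of_le_add_mul_integral {f : ℝ → ℝ} {a T b c : ℝ} (haT : a ≤ T)
    (hb : 0 ≤ b) (hf : ContinuousOn f (Icc a T))
    (hle : ∀ u ∈ Icc a T, f u ≤ c + b * ∫ s in a..u, f s) :
    b * ∫ s in a..T, f s ≤ c * (exp (b * (T - a)) - 1) := by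
  set φ : ℝ → ℝ := fun u => ∫ s in a..u, f s
  have hφcont : ContinuousOn φ (Icc a T) := by
    have hint : IntegrableOn f (uIcc a T) := by
      simpa only [uIcc_of_le haT] using hf.integrableOn_Icc
    simpa only [uIcc_of_le haT] using intervalIntegral.continuousOn_primitive_interval hint
  have hφderiv : ∀ u ∈ Ico a T, HasDerivWithinAt φ (f u) (Ici u) u := by
    intro u hu
    have : Fact (u ∈ Icc a T) := ⟨Ico_subset_Icc_self hu⟩
    have hderiv : HasDerivWithinAt φ (f u) (Icc a T) u :=
      intervalIntegral.integral_hasDerivWithinAt_right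
        ((hf.mono (Icc_subset_Icc_right hu.2.le)).intervalIntegrable_of_Icc hu.1)
        (hf.stronglyMeasurableAtFilter_nhdsWithin measurableSet_Icc u) (hf u this.out)
    exact (hderiv.mono (Icc_subset_Icc_left hu.1)).mono_of_mem_nhdsWithin
      (Icc_mem_nhdsGE hu.2)
  have hφT : φ T ≤ gronwallBound 0 b c (T - a) :=
    le_gronwallBound_of_liminf_deriv_right_le hφcont
      (fun u hu _ hr => (hφderiv u hu).liminf_right_slope_le hr) (by simp [φ])
      (fun u hu => by linarith [hle u (Ico_subset_Icc_self hu)]) T ⟨haT, le_rfl⟩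
  calc b * φ T ≤ b * gronwallBound 0 b c (T - a) := by gcongr
    _ = c * (exp (b * (T - a)) - 1) := mul_gronwallBound_zero b c (T - a)

theorem exp_neg_mul_dist_le {V : Type*} [PseudoMetricSpace V] {lam : ℝ} (hlam : 0 ≤ lam)
    (x y z : V) : exp (-(lam * dist x z)) ≤ exp (lam * dist z y) * exp (-(lam * dist x y)) := by
  rw [← exp_add, exp_le_exp]
  nlinarith [dist_triangle x z y]

section ExpWeightedMax

variable {V : Type*} [Fintype V] [Nonempty V] [MetricSpace V]

noncomputable def expWeightedMax (lam : ℝ) (x : V) (C : V → ℝ → ℝ) (s : ℝ) : ℝ :=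
  Finset.univ.sup' Finset.univ_nonempty fun y => exp (-(lam * dist x y)) * C y s

variable {lam K : ℝ} {ε : V → V → ℝ} {C : V → ℝ → ℝ}

theorem le_expWeightedMax (x y : V) (s : ℝ) :
    exp (-(lam * dist x y)) * C y s ≤ expWeightedMax lam x C s :=
  Finset.le_sup' (fun y => exp (-(lam * dist x y)) * C y s) (Finset.mem_univ y)

theorem expWeightedMax_nonneg {s : ℝ} (x : V) (hC : ∀ y, 0 ≤ C y s) :
    0 ≤ expWeightedMax lam x C s :=
  (mul_nonneg (exp_pos _).le (hC x)).trans (le_expWeightedMax x x s)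

theorem expWeightedMax_le_sum [DecidableEq V] {s : ℝ} (x : V) (hC : ∀ y, 0 ≤ C y s) :
    expWeightedMax lam x C s ≤
      C x s + ∑ y ∈ Finset.univ.erase x, exp (-(lam * dist x y)) * C y s := by
  refine Finset.sup'_le _ _ fun z _ => ?_
  have hsum := Finset.add_sum_erase Finset.univ (fun y => exp (-(lam * dist x y)) * C y s)
    (Finset.mem_univ x)
  simp only [dist_self, mul_zero, neg_zero, exp_zero, one_mul] at hsum
  rw [hsum]
  exact Finset.single_le_sum (f := fun y => exp (-(lam * dist x y)) * C y s)
    (fun y _ => mul_nonneg (exp_pos _).le (hC y)) (Finset.mem_univ z)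

theorem continuousOn_expWeightedMax {S : Set ℝ} (x : V) (hC : ∀ y, ContinuousOn (C y) S) :
    ContinuousOn (expWeightedMax lam x C) S :=
  ContinuousOn.finset_sup'_apply _ fun y _ => continuousOn_const.mul (hC y)

theorem exp_neg_mul_dist_mul_sum_le (hlam : 0 ≤ lam) {x z : V} {s : ℝ}
    (hε0 : ∀ y, 0 ≤ ε z y) (hεK : ∑ y, exp (lam * dist z y) * ε z y ≤ K)
    (hC : ∀ y, 0 ≤ C y s) :
    exp (-(lam * dist x z)) * ∑ y, ε z y * C y s ≤ K * expWeightedMax lam x C s := by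
  calc exp (-(lam * dist x z)) * ∑ y, ε z y * C y s
      ≤ ∑ y, exp (lam * dist z y) * ε z y * expWeightedMax lam x C s := by
        rw [Finset.mul_sum]
        refine Finset.sum_le_sum fun y _ => ?_
        calc exp (-(lam * dist x z)) * (ε z y * C y s)
            ≤ exp (lam * dist z y) * exp (-(lam * dist x y)) * (ε z y * C y s) := by
              gcongr
              · exact mul_nonneg (hε0 y) (hC y)
              · exact exp_neg_mul_dist_le hlam x y z
          _ = exp (lam * dist z y) * ε z y * (exp (-(lam * dist x y)) * C y s) := by ring
          _ ≤ exp (lam * dist z y) * ε z y * expWeightedMax lam x C s := by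
              gcongr
              · exact mul_nonneg (exp_pos _).le (hε0 y)
              · exact le_expWeightedMax x y s
    _ = (∑ y, exp (lam * dist z y) * ε z y) * expWeightedMax lam x C s := by
        rw [Finset.sum_mul]
    _ ≤ K * expWeightedMax lam x C s := by
        gcongr
        exact expWeightedMax_nonneg x hC

theorem exp_neg_mul_dist_mul_integral_le (hlam : 0 ≤ lam) {x z : V} {u : ℝ} (hu : 0 ≤ u)
    (hε0 : ∀ y, 0 ≤ ε z y) (hεK : ∑ y, exp (lam * dist z y) * ε z y ≤ K)
    (hC0 : ∀ y s, 0 ≤ s → 0 ≤ C y s) (hCcont : ∀ y, ContinuousOn (C y) (Ici 0)) :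
    exp (-(lam * dist x z)) * ∫ s in (0 : ℝ)..u, ∑ y, ε z y * C y s ≤
      K * ∫ s in (0 : ℝ)..u, expWeightedMax lam x C s := by
  have hcont : ∀ y, ContinuousOn (C y) (uIcc 0 u) := fun y =>
    (hCcont y).mono (by simp only [uIcc_of_le hu, Icc_subset_Ici_self])
  rw [← intervalIntegral.integral_const_mul, ← intervalIntegral.integral_const_mul]
  refine intervalIntegral.integral_mono_on hu ?_ ?_ fun s hs =>
    exp_neg_mul_dist_mul_sum_le hlam hε0 hεK fun y => hC0 y s hs.1
  · exact (continuousOn_const.mul (continuousOn_finsetSum _ fun y _ =>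
      continuousOn_const.mul (hcont y))).intervalIntegrable
  · exact (continuousOn_const.mul (continuousOn_expWeightedMax x hcont)).intervalIntegrable

theorem expWeightedMax_le_add_integral (hlam : 0 ≤ lam) (x : V) {u : ℝ} (hu : 0 ≤ u)
    (hε0 : ∀ z y, 0 ≤ ε z y) (hεK : ∀ z, ∑ y, exp (lam * dist z y) * ε z y ≤ K)
    (hC0 : ∀ y s, 0 ≤ s → 0 ≤ C y s) (hCcont : ∀ y, ContinuousOn (C y) (Ici 0))
    (hCineq : ∀ z, C z u ≤ C z 0 + 2 * ∫ s in (0 : ℝ)..u, ∑ y, ε z y * C y s) :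
    expWeightedMax lam x C u ≤
      expWeightedMax lam x C 0 + 2 * K * ∫ s in (0 : ℝ)..u, expWeightedMax lam x C s := by
  refine Finset.sup'_le _ _ fun z _ => ?_
  have hint := exp_neg_mul_dist_mul_integral_le (x := x) hlam hu (hε0 z) (hεK z) hC0 hCcont
  have h0 := le_expWeightedMax (lam := lam) (C := C) x z 0
  have hw := (exp_pos (-(lam * dist x z))).le
  linarith [mul_le_mul_of_nonneg_left (hCineq z) hw]

end ExpWeightedMax

open scoped Classical in
theorem gronwall_iteration_general
    {V : Type} [Fintype V] [MetricSpace V]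
    (lam K : ℝ) (hlam : 0 < lam) (hK : 0 ≤ K)
    (ε : V → V → ℝ) (hε0 : ∀ x y : V, 0 ≤ ε x y)
    (hεK : ∀ x : V, ∑ y : V, Real.exp (lam * dist x y) * ε x y ≤ K)
    (C : V → ℝ → ℝ)
    (hC0 : ∀ (x : V) (t : ℝ), 0 ≤ t → 0 ≤ C x t)
    (hCcont : ∀ x : V, ContinuousOn (C x) (Set.Ici 0))
    (hCineq : ∀ (x : V) (t : ℝ), 0 ≤ t →
      C x t ≤ C x 0 + 2 * ∫ s in (0 : ℝ)..t, ∑ y : V, ε x y * C y s)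
    (x : V) (t : ℝ) (ht : 0 ≤ t) :
    C x t ≤ Real.exp (2 * t * K) * C x 0 +
      ∑ y ∈ Finset.univ.filter (fun y : V => y ≠ x),
        Real.exp (-(lam * dist x y)) * ((Real.exp (2 * t * K) - 1) * C y 0) := by
  have : Nonempty V := ⟨x⟩
  set H := expWeightedMax lam x C
  set e := exp (2 * t * K)
  have hgron : 2 * K * ∫ s in (0 : ℝ)..t, H s ≤ H 0 * (e - 1) := by
    have h := mul_integral_le_of_le_add_mul_integral ht (by positivity)
      ((continuousOn_expWeightedMax x hCcont).mono Icc_subset_Ici_self) fun u hu =>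
        expWeightedMax_le_add_integral hlam.le x hu.1 hε0 hεK hC0 hCcont fun z => hCineq z u hu.1
    rwa [sub_zero, mul_right_comm 2 K t] at h
  have hCx : C x t ≤ C x 0 + 2 * K * ∫ s in (0 : ℝ)..t, H s := by
    have h := exp_neg_mul_dist_mul_integral_le (x := x) hlam.le ht (hε0 x) (hεK x) hC0 hCcont
    rw [dist_self, mul_zero, neg_zero, exp_zero, one_mul] at h
    linarith [hCineq x t ht]
  have hH0 := expWeightedMax_le_sum (lam := lam) x fun y => hC0 y 0 le_rfl
  have he : 1 ≤ e := one_le_exp (by positivity)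
  have hsum : ∑ y ∈ Finset.univ.filter (fun y : V => y ≠ x),
      exp (-(lam * dist x y)) * ((e - 1) * C y 0) =
      (e - 1) * ∑ y ∈ Finset.univ.erase x, exp (-(lam * dist x y)) * C y 0 := by
    rw [Finset.filter_ne', Finset.mul_sum]
    exact Finset.sum_congr rfl fun y _ => by ring
  rw [hsum]
  linarith [mul_le_mul_of_nonneg_right hH0 (sub_nonneg.2 he)]

open scoped Classical in
/-- Gronwall-type iteration lemma: if `C` is a bounded nonnegative function, continuous in
its second variable, satisfying
`C(x,t) ≤ C(x,0) + 2∫_0^t ∑_y ε(x,y) C(y,s) ds`, with `∑_y e^{λ d(x,y)} ε(x,y) ≤ K`, then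
`C(x,t) ≤ e^{2tK} C(x,0) + ∑_{y ≠ x} e^{−λ d(x,y)} (e^{2tK} − 1) C(y,0)`. -/
theorem gronwall_iteration
    {V : Type} [Fintype V] [MetricSpace V]
    (lam K : ℝ) (hlam : 0 < lam) (hK : 0 ≤ K)
    (ε : V → V → ℝ) (hε0 : ∀ x y : V, 0 ≤ ε x y)
    (hεK : ∀ x : V, ∑ y : V, Real.exp (lam * dist x y) * ε x y ≤ K)
    (C : V → ℝ → ℝ)
    (hC0 : ∀ (x : V) (t : ℝ), 0 ≤ t → 0 ≤ C x t)
    (hCbdd : ∃ M : ℝ, ∀ (x : V) (t : ℝ), 0 ≤ t → C x t ≤ M)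
    (hCcont : ∀ x : V, ContinuousOn (C x) (Set.Ici 0))
    (hCineq : ∀ (x : V) (t : ℝ), 0 ≤ t →
      C x t ≤ C x 0 + 2 * ∫ s in (0 : ℝ)..t, ∑ y : V, ε x y * C y s)
    (x : V) (t : ℝ) (ht : 0 ≤ t) :
    C x t ≤ Real.exp (2 * t * K) * C x 0 +
      ∑ y ∈ Finset.univ.filter (fun y : V => y ≠ x),
        Real.exp (-(lam * dist x y)) * ((Real.exp (2 * t * K) - 1) * C y 0) :=
  gronwall_iteration_general lam K hlam hK ε hε0 hεK C hC0 hCcont hCineq x t ht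
end

section
/- Fix λ > 0 and let Φ be an interaction with ‖Φ‖_λ < ∞. Then for every X ⊆ V, every A ∈ A_X, every B ∈ A_V, and every t ∈ ℝ, one has ‖[τ_t(A), B]‖ ≤ N^{2|X|} ‖A‖ Σ_{x∈X} C_B(x,t). -/
/-
Peel off one site `x ∈ X` at a time. Writing `A = ∑_{a,b} |a⟩⟨b|_x ⊗ A_{ab}` with
`A_{ab} ∈ 𝒜_{X∖{x}}` and `‖A_{ab}‖ ≤ ‖A‖`, the Leibniz rule
`[τ(PQ), B] = τ(P) [τ(Q), B] + [τ(P), B] τ(Q)` for the norm-preserving automorphism `τ = τ_t`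
bounds each of the `n_x² ≤ N²` terms by `‖[τ(A_{ab}), B]‖ + C_B(x,t) ‖A‖`; induction on `X`
accumulates the factor `N^{2|X|}`, starting from `𝒜_∅ = ℂ·1`, whose elements commute with `B`.
-/

noncomputable section LiebRobinson

open scoped BigOperators

/-- The Hilbert space of the whole system: `⊗_{x ∈ V} ℂ^{n x}`, realized concretely as
`ℓ²`-functions on the configuration space `∀ x, Fin (n x)`. -/
abbrev LRSpace {V : Type} [Fintype V] [DecidableEq V] (n : V → ℕ) :=
  EuclideanSpace ℂ (∀ x : V, Fin (n x))

/-- Bounded operators on the total Hilbert space. -/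
abbrev LROp {V : Type} [Fintype V] [DecidableEq V] (n : V → ℕ) :=
  LRSpace n →L[ℂ] LRSpace n

/-- The matrix entry of an operator between configuration basis vectors. -/
def LREntry {V : Type} [Fintype V] [DecidableEq V] {n : V → ℕ}
    (A : LROp n) (f g : ∀ x : V, Fin (n x)) : ℂ :=
  inner ℂ (EuclideanSpace.single f (1 : ℂ)) (A (EuclideanSpace.single g (1 : ℂ)))

open scoped Classical in
/-- `A` belongs to the local algebra `𝒜_X`: it acts as `M ⊗ 1` for some matrix `M`
supported on the sites in `X`. -/
def SupportedOn {V : Type} [Fintype V] [DecidableEq V] {n : V → ℕ}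
    (X : Set V) (A : LROp n) : Prop :=
  ∃ M : (∀ x : X, Fin (n x)) → (∀ x : X, Fin (n x)) → ℂ,
    ∀ f g : ∀ x : V, Fin (n x),
      LREntry A f g =
        M (fun x => f x.1) (fun x => g x.1) *
          (if ∀ y, y ∉ X → f y = g y then 1 else 0)

/-- An interaction: an assignment of a self-adjoint observable `Φ(X) ∈ 𝒜_X` to every
subset `X ⊆ V`. -/
structure Interaction (V : Type) [Fintype V] [DecidableEq V] (n : V → ℕ) where
  Φ : Set V → LROp n
  supported : ∀ X : Set V, SupportedOn X (Φ X)
  selfAdjoint : ∀ X : Set V, IsSelfAdjoint (Φ X)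

/-- The Hamiltonian `H = ∑_{X ⊆ V} Φ(X)`. -/
def Interaction.ham {V : Type} [Fintype V] [DecidableEq V] {n : V → ℕ}
    (Φ : Interaction V n) : LROp n :=
  ∑ X : Set V, Φ.Φ X

/-- The Heisenberg dynamics `τ_t(A) = e^{itH} A e^{-itH}`. -/
def Interaction.evol {V : Type} [Fintype V] [DecidableEq V] {n : V → ℕ}
    (Φ : Interaction V n) (t : ℝ) (A : LROp n) : LROp n :=
  NormedSpace.exp ((Complex.I * t) • Φ.ham) * A *
    NormedSpace.exp ((-(Complex.I * t)) • Φ.ham)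

/-- The imaginary-time evolved observable `τ_{ib}(B) = e^{-bH} B e^{bH}`. -/
def Interaction.imEvol {V : Type} [Fintype V] [DecidableEq V] {n : V → ℕ}
    (Φ : Interaction V n) (b : ℝ) (B : LROp n) : LROp n :=
  NormedSpace.exp ((-b : ℂ) • Φ.ham) * B * NormedSpace.exp ((b : ℂ) • Φ.ham)

open scoped Classical in
/-- The interaction norm `‖Φ‖_λ = max_x ∑_{X ∋ x} |X| ‖Φ(X)‖ N^{2|X|} e^{λ D(X)}`. -/
def intNorm {V : Type} [Fintype V] [DecidableEq V] [MetricSpace V] {n : V → ℕ}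
    (lam : ℝ) (N : ℕ) (Φ : Interaction V n) : ℝ :=
  ⨆ x : V, ∑ X ∈ Finset.univ.filter (fun X : Set V => x ∈ X),
    (X.ncard : ℝ) * ‖Φ.Φ X‖ * (N : ℝ) ^ (2 * X.ncard) * Real.exp (lam * Metric.diam X)

/-- `C_B(x,t) = sup { ‖[τ_t(A),B]‖ / ‖A‖ : 0 ≠ A ∈ 𝒜_x }`. -/
def CB {V : Type} [Fintype V] [DecidableEq V] [MetricSpace V] {n : V → ℕ}
    (Φ : Interaction V n) (B : LROp n) (x : V) (t : ℝ) : ℝ :=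
  ⨆ A : {A : LROp n // SupportedOn {x} A ∧ A ≠ 0},
    ‖Φ.evol t A.1 * B - B * Φ.evol t A.1‖ / ‖A.1‖

end LiebRobinson

noncomputable section

namespace Interaction

variable {V : Type} [Fintype V] [DecidableEq V] {n : V → ℕ}

lemma isSelfAdjoint_ham (Φ : Interaction V n) : IsSelfAdjoint Φ.ham := by
  rw [ham, IsSelfAdjoint, star_sum (R := LROp n)]
  exact Finset.sum_congr rfl fun X _ => (Φ.selfAdjoint X).star_eq

def propagator (Φ : Interaction V n) (t : ℝ) : unitary (LROp n) :=
  selfAdjoint.expUnitary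
    ⟨(t : ℂ) • Φ.ham, IsSelfAdjoint.smul (Complex.conj_ofReal t) Φ.isSelfAdjoint_ham⟩

lemma coe_propagator (Φ : Interaction V n) (t : ℝ) :
    (Φ.propagator t : LROp n) = NormedSpace.exp ((Complex.I * t) • Φ.ham) := by
  rw [propagator, selfAdjoint.expUnitary_coe, smul_smul]

lemma star_coe_propagator (Φ : Interaction V n) (t : ℝ) :
    star (Φ.propagator t : LROp n) = NormedSpace.exp ((-(Complex.I * t)) • Φ.ham) := by
  rw [coe_propagator, NormedSpace.star_exp, star_smul, Φ.isSelfAdjoint_ham.star_eq]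
  simp [Complex.conj_ofReal]

lemma evol_eq_conjStarAlgAut (Φ : Interaction V n) (t : ℝ) (A : LROp n) :
    Φ.evol t A = Unitary.conjStarAlgAut ℂ (LROp n) (Φ.propagator t) A := by
  rw [Unitary.conjStarAlgAut_apply, star_coe_propagator, coe_propagator, evol]

lemma norm_evol (Φ : Interaction V n) (t : ℝ) (A : LROp n) : ‖Φ.evol t A‖ = ‖A‖ := by
  rw [evol_eq_conjStarAlgAut, Unitary.conjStarAlgAut_apply, ← Unitary.coe_star,
    CStarRing.norm_mul_coe_unitary, CStarRing.norm_coe_unitary_mul]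

end Interaction

open Matrix Function

namespace LiebRobinson

variable {V : Type} [Fintype V] [DecidableEq V] {n : V → ℕ}

abbrev Config (n : V → ℕ) := ∀ x : V, Fin (n x)

def opMatrix : LROp n ≃⋆ₐ[ℂ] Matrix (Config n) (Config n) ℂ := toEuclideanCLM.symm

lemma apply_eq_sum_opMatrix (A : LROp n) (v : LRSpace n) (f : Config n) :
    A v f = ∑ g, opMatrix A f g * v g := by
  conv_lhs => rw [← opMatrix.symm_apply_apply A]
  exact congrFun (ofLp_toEuclideanCLM (opMatrix A) v) f

lemma LREntry_eq_opMatrix (A : LROp n) (f g : Config n) : LREntry A f g = opMatrix A f g := by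
  simp [LREntry, EuclideanSpace.inner_single_left, apply_eq_sum_opMatrix]

/-- The matrix unit `|a⟩⟨b|` at site `x`, tensored with the identity on the other sites. -/
def siteUnit (x : V) (a b : Fin (n x)) : LROp n :=
  opMatrix.symm (of fun f g : Config n => if f x = a ∧ g = update f x b then 1 else 0)

lemma opMatrix_siteUnit (x : V) (a b : Fin (n x)) (f g : Config n) :
    opMatrix (siteUnit x a b) f g = if f x = a ∧ g = update f x b then 1 else 0 := by
  simp [siteUnit]

lemma siteUnit_apply (x : V) (a b : Fin (n x)) (v : LRSpace n) (f : Config n) :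
    siteUnit x a b v f = if f x = a then v (update f x b) else 0 := by
  simp [apply_eq_sum_opMatrix, opMatrix_siteUnit, ite_and]

lemma opMatrix_siteUnit_mul (x : V) (a b : Fin (n x)) (Q : LROp n) (f g : Config n) :
    opMatrix (siteUnit x a b * Q) f g
      = if f x = a then opMatrix Q (update f x b) g else 0 := by
  simp [map_mul, mul_apply, opMatrix_siteUnit, ite_and]

lemma opMatrix_mul_siteUnit (x : V) (a b : Fin (n x)) (Q : LROp n) (f g : Config n) :
    opMatrix (Q * siteUnit x a b) f g
      = if g x = b then opMatrix Q f (update g x a) else 0 := by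
  have hiff : ∀ h : Config n, (h x = a ∧ g = update h x b) ↔ (g x = b ∧ h = update g x a) := by
    intro h
    constructor <;> rintro ⟨h₁, rfl⟩ <;> simp [← h₁]
  simp [map_mul, mul_apply, opMatrix_siteUnit, hiff, ite_and]

/-- The coefficient `A_{ab}` in the expansion `A = ∑_{a,b} |a⟩⟨b|_x ⊗ A_{ab}`
(`sum_siteUnit_mul_siteComp`). -/
def siteComp (x : V) (a b : Fin (n x)) (A : LROp n) : LROp n :=
  ∑ c, siteUnit x c a * A * siteUnit x b c

lemma opMatrix_siteComp (x : V) (a b : Fin (n x)) (A : LROp n) (f g : Config n) :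
    opMatrix (siteComp x a b A) f g
      = if f x = g x then opMatrix A (update f x a) (update g x b) else 0 := by
  simp only [siteComp, map_sum, Matrix.sum_apply]
  simp_rw [mul_assoc, opMatrix_siteUnit_mul, opMatrix_mul_siteUnit]
  simp [eq_comm]

lemma sum_siteUnit_mul_siteComp (x : V) (A : LROp n) :
    ∑ p : Fin (n x) × Fin (n x), siteUnit x p.1 p.2 * siteComp x p.1 p.2 A = A := by
  refine EquivLike.injective opMatrix (Matrix.ext fun f g => ?_)
  simp only [map_sum, Matrix.sum_apply, Fintype.sum_prod_type]
  simp_rw [opMatrix_siteUnit_mul, opMatrix_siteComp]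
  simp

lemma sum_filter_comp_update {ι : Type*} [Fintype ι] [DecidableEq ι] {β : ι → Type*}
    [∀ i, Fintype (β i)] [∀ i, DecidableEq (β i)] {M : Type*} [AddCommMonoid M]
    (i : ι) (a b : β i) (F : (∀ i, β i) → M) :
    ∑ f with f i = a, F (update f i b) = ∑ g with g i = b, F g := by
  refine Finset.sum_nbij' (update · i b) (update · i a) ?_ ?_ ?_ ?_ fun _ _ => rfl <;>
    simp +contextual [← Finset.mem_coe]

lemma norm_sq_siteUnit_apply (x : V) (a b : Fin (n x)) (v : LRSpace n) :
    ‖siteUnit x a b v‖ ^ 2 = ∑ g with g x = b, ‖v g‖ ^ 2 := by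
  rw [EuclideanSpace.norm_sq_eq, ← sum_filter_comp_update x a b fun g => ‖v g‖ ^ 2,
    Finset.sum_filter]
  simp [siteUnit_apply, apply_ite]

lemma norm_siteUnit_le (x : V) (a b : Fin (n x)) : ‖(siteUnit x a b : LROp n)‖ ≤ 1 := by
  refine ContinuousLinearMap.opNorm_le_bound _ zero_le_one fun v => ?_
  rw [one_mul, ← pow_le_pow_iff_left₀ (norm_nonneg _) (norm_nonneg _) two_ne_zero,
    norm_sq_siteUnit_apply, EuclideanSpace.norm_sq_eq]
  exact Finset.sum_le_sum_of_subset_of_nonneg (Finset.filter_subset _ _) fun _ _ _ => by positivity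

lemma sum_norm_sq_siteUnit_apply (x : V) (b : Fin (n x)) (v : LRSpace n) :
    ∑ c, ‖siteUnit x b c v‖ ^ 2 = ‖v‖ ^ 2 := by
  simp_rw [norm_sq_siteUnit_apply, Finset.sum_fiberwise, EuclideanSpace.norm_sq_eq]

lemma norm_sq_sum_of_apply_eq_zero (x : V) (w : Fin (n x) → LRSpace n)
    (hw : ∀ c f, f x ≠ c → w c f = 0) : ‖∑ c, w c‖ ^ 2 = ∑ c, ‖w c‖ ^ 2 := by
  have hdiag : ∀ f, ∑ c, w c f = w (f x) f := fun f =>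
    Finset.sum_eq_single (f x) (fun c _ hc => hw c f (Ne.symm hc)) (by simp)
  have hdiag' : ∀ f, ∑ c, ‖w c f‖ ^ 2 = ‖w (f x) f‖ ^ 2 := fun f =>
    Finset.sum_eq_single (f x) (fun c _ hc => by simp [hw c f (Ne.symm hc)]) (by simp)
  simp_rw [EuclideanSpace.norm_sq_eq, WithLp.ofLp_sum, Finset.sum_apply, hdiag]
  rw [Finset.sum_comm]
  simp_rw [hdiag']

lemma norm_siteComp_le (x : V) (a b : Fin (n x)) (A : LROp n) : ‖siteComp x a b A‖ ≤ ‖A‖ := by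
  refine ContinuousLinearMap.opNorm_le_bound _ (norm_nonneg A) fun v => ?_
  have hsplit : siteComp x a b A v = ∑ c, siteUnit x c a (A (siteUnit x b c v)) := by
    simp [siteComp]
  rw [← pow_le_pow_iff_left₀ (norm_nonneg _) (by positivity) two_ne_zero, hsplit,
    norm_sq_sum_of_apply_eq_zero x _ fun c f hc => by simp [siteUnit_apply, hc]]
  calc ∑ c, ‖siteUnit x c a (A (siteUnit x b c v))‖ ^ 2
      ≤ ∑ c, (‖A‖ * ‖siteUnit x b c v‖) ^ 2 := by
        gcongr with c
        exact (ContinuousLinearMap.le_of_opNorm_le _ (norm_siteUnit_le x c a) _).trans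
          ((one_mul _).trans_le (A.le_opNorm _))
    _ = (‖A‖ * ‖v‖) ^ 2 := by
        simp_rw [mul_pow, ← Finset.mul_sum, sum_norm_sq_siteUnit_apply]

open scoped Classical in
lemma supportedOn_of_opMatrix_eq {X : Set V} {A : LROp n} (F : Config n → Config n → ℂ)
    (hF : ∀ f g f' g' : Config n, (∀ y ∈ X, f y = f' y) → (∀ y ∈ X, g y = g' y) →
      F f g = F f' g')
    (hA : ∀ f g, opMatrix A f g = F f g * if ∀ y, y ∉ X → f y = g y then 1 else 0) :
    SupportedOn X A := by
  let restrict : Config n × Config n → (∀ y : X, Fin (n y)) × (∀ y : X, Fin (n y)) :=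
    fun p => (fun y => p.1 y, fun y => p.2 y)
  have hfactor : (uncurry F).FactorsThrough restrict := by
    intro p q hpq
    simp only [restrict, Prod.mk.injEq, funext_iff, Subtype.forall] at hpq
    exact hF _ _ _ _ hpq.1 hpq.2
  obtain ⟨M, hM⟩ := (factorsThrough_iff _).mp hfactor
  refine ⟨curry M, fun f g => ?_⟩
  rw [LREntry_eq_opMatrix, hA]
  exact congrArg (· * _) (congrFun hM (f, g))

lemma supportedOn_siteUnit (x : V) (a b : Fin (n x)) :
    SupportedOn {x} (siteUnit x a b : LROp n) := by
  refine supportedOn_of_opMatrix_eq (fun f g => if f x = a ∧ g x = b then 1 else 0)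
    (fun f g f' g' hf hg => by simp [hf x rfl, hg x rfl]) fun f g => ?_
  simp only [opMatrix_siteUnit, eq_update_iff]
  by_cases hfa : f x = a <;> by_cases hgb : g x = b <;> simp [hfa, hgb, eq_comm]

lemma supportedOn_siteComp {x : V} {Y : Set V} (hx : x ∉ Y) {A : LROp n}
    (hA : SupportedOn (insert x Y) A) (a b : Fin (n x)) : SupportedOn Y (siteComp x a b A) := by
  obtain ⟨M, hM⟩ := hA
  have hupdate : ∀ (c : Fin (n x)) (f f' : Config n), (∀ y ∈ Y, f y = f' y) →
      ∀ y ∈ insert x Y, update f x c y = update f' x c y := by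
    rintro c f f' h y (rfl | hy)
    · simp
    · simp [ne_of_mem_of_not_mem hy hx, h y hy]
  refine supportedOn_of_opMatrix_eq
    (fun f g => M (fun y => update f x a y) (fun y => update g x b y))
    (fun f g f' g' hf hg => by
      congr 1 <;> funext y
      exacts [hupdate a f f' hf y y.2, hupdate b g g' hg y y.2]) fun f g => ?_
  rw [opMatrix_siteComp, ← LREntry_eq_opMatrix, hM]
  have hagree : (f x = g x ∧ ∀ y ∉ insert x Y, update f x a y = update g x b y) ↔
      ∀ y ∉ Y, f y = g y := by
    refine ⟨fun ⟨hfg, h⟩ y hy => ?_, fun h => ⟨h x hx, fun y hy => ?_⟩⟩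
    · by_cases hyx : y = x
      · exact hyx ▸ hfg
      · simpa [hyx] using h y (by simp [hyx, hy])
    · simp_all
  by_cases hQ : ∀ y ∉ Y, f y = g y
  · obtain ⟨hfg, hP⟩ := hagree.mpr hQ
    rw [if_pos hfg, if_pos hP, if_pos hQ]
  · rw [if_neg hQ, mul_zero]
    split_ifs with hfg hP
    exacts [absurd ⟨hfg, hP⟩ (mt hagree.mp hQ), mul_zero _, rfl]

lemma eq_smul_one_of_supportedOn_empty {A : LROp n} (hA : SupportedOn ∅ A) :
    ∃ c : ℂ, A = c • 1 := by
  obtain ⟨M, hM⟩ := hA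
  refine ⟨M default default, EquivLike.injective opMatrix (Matrix.ext fun f g => ?_)⟩
  rw [← LREntry_eq_opMatrix, hM, Subsingleton.elim (fun y : (∅ : Set V) => f y) default,
    Subsingleton.elim (fun y : (∅ : Set V) => g y) default]
  simp [Matrix.one_apply, funext_iff]

lemma norm_mul_sub_mul_le {R : Type*} [NonUnitalSeminormedRing R] (P B : R) :
    ‖P * B - B * P‖ ≤ 2 * ‖P‖ * ‖B‖ := by
  linarith [norm_sub_le (P * B) (B * P), norm_mul_le P B, norm_mul_le B P]

lemma norm_mul_mul_sub_mul_mul_le {R : Type*} [NonUnitalSeminormedRing R] (P Q B : R) :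
    ‖P * Q * B - B * (P * Q)‖ ≤ ‖P‖ * ‖Q * B - B * Q‖ + ‖P * B - B * P‖ * ‖Q‖ := by
  have h : P * Q * B - B * (P * Q) = P * (Q * B - B * Q) + (P * B - B * P) * Q := by
    noncomm_ring
  rw [h]
  exact (norm_add_le _ _).trans (add_le_add (norm_mul_le _ _) (norm_mul_le _ _))

section Locality

variable {F : Type*} [FunLike F (LROp n) (LROp n)] [AlgHomClass F ℂ (LROp n) (LROp n)]
  (τ : F) (B : LROp n) (C : V → ℝ)

lemma norm_commutator_le_of_supportedOn_insert (hτ : ∀ A, ‖τ A‖ ≤ ‖A‖) (hC₀ : ∀ x, 0 ≤ C x)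
    (hC : ∀ x U, SupportedOn {x} U → ‖τ U * B - B * τ U‖ ≤ C x * ‖U‖)
    {x : V} {Y : Set V} (hx : x ∉ Y) {K : ℝ}
    (hK₀ : 0 ≤ K) (hK : ∀ A, SupportedOn Y A → ‖τ A * B - B * τ A‖ ≤ K * ‖A‖)
    {A : LROp n} (hA : SupportedOn (insert x Y) A) :
    ‖τ A * B - B * τ A‖ ≤ n x ^ 2 * (K + C x) * ‖A‖ := by
  have hterm : ∀ p : Fin (n x) × Fin (n x),
      ‖τ (siteUnit x p.1 p.2 * siteComp x p.1 p.2 A) * B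
        - B * τ (siteUnit x p.1 p.2 * siteComp x p.1 p.2 A)‖ ≤ (K + C x) * ‖A‖ := by
    rintro ⟨a, b⟩
    have hcomp := norm_siteComp_le x a b A
    have hunit : ‖τ (siteUnit x a b)‖ ≤ 1 := (hτ _).trans (norm_siteUnit_le x a b)
    rw [map_mul]
    refine (norm_mul_mul_sub_mul_mul_le _ _ _).trans ?_
    have hcommComp : ‖τ (siteComp x a b A) * B - B * τ (siteComp x a b A)‖ ≤ K * ‖A‖ :=
      (hK _ (supportedOn_siteComp hx hA a b)).trans (by gcongr)
    have hcommUnit : ‖τ (siteUnit x a b) * B - B * τ (siteUnit x a b)‖ ≤ C x * 1 :=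
      (hC x _ (supportedOn_siteUnit x a b)).trans
        (mul_le_mul_of_nonneg_left (norm_siteUnit_le x a b) (hC₀ x))
    calc _ ≤ 1 * (K * ‖A‖) + C x * 1 * ‖A‖ := by
          gcongr
          · exact (norm_nonneg _).trans hcommUnit
          · exact (hτ _).trans hcomp
      _ = (K + C x) * ‖A‖ := by ring
  calc ‖τ A * B - B * τ A‖
      = ‖∑ p : Fin (n x) × Fin (n x), (τ (siteUnit x p.1 p.2 * siteComp x p.1 p.2 A) * B
          - B * τ (siteUnit x p.1 p.2 * siteComp x p.1 p.2 A))‖ := by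
        conv_lhs => rw [← sum_siteUnit_mul_siteComp x A]
        rw [map_sum, Finset.sum_mul, Finset.mul_sum, ← Finset.sum_sub_distrib]
    _ ≤ ∑ _p : Fin (n x) × Fin (n x), (K + C x) * ‖A‖ :=
        (norm_sum_le _ _).trans (Finset.sum_le_sum fun p _ => hterm p)
    _ = n x ^ 2 * (K + C x) * ‖A‖ := by
        simp only [Finset.sum_const, Finset.card_univ, Fintype.card_prod, Fintype.card_fin,
          nsmul_eq_mul]
        push_cast
        ring

theorem norm_commutator_le_of_supportedOn (hτ : ∀ A, ‖τ A‖ ≤ ‖A‖) (hC₀ : ∀ x, 0 ≤ C x)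
    (hC : ∀ x U, SupportedOn {x} U → ‖τ U * B - B * τ U‖ ≤ C x * ‖U‖)
    {N : ℕ} (hN : ∀ x, n x ≤ N) (s : Finset V)
    {A : LROp n} (hA : SupportedOn (s : Set V) A) :
    ‖τ A * B - B * τ A‖ ≤ N ^ (2 * s.card) * ‖A‖ * ∑ x ∈ s, C x := by
  induction s using Finset.induction_on generalizing A with
  | empty =>
    obtain ⟨c, rfl⟩ := eq_smul_one_of_supportedOn_empty (by simpa using hA)
    rw [← Algebra.algebraMap_eq_smul_one, AlgHomClass.commutes, sub_eq_zero.mpr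
      (Algebra.commutes c B)]
    simp
  | insert x s hx ih =>
    rw [Finset.coe_insert] at hA
    set S := ∑ y ∈ s, C y
    have hS : 0 ≤ S := Finset.sum_nonneg fun y _ => hC₀ y
    refine (norm_commutator_le_of_supportedOn_insert τ B C hτ hC₀ hC (by simpa using hx)
      (K := N ^ (2 * s.card) * S) (by positivity) (fun A' hA' => (ih hA').trans_eq (by ring))
      hA).trans ?_
    have hnx : (n x : ℝ) ^ 2 ≤ N ^ 2 := pow_le_pow_left₀ (by positivity) (by exact_mod_cast hN x) 2
    have hnx' : (n x : ℝ) ^ 2 ≤ N ^ 2 * N ^ (2 * s.card) := by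
      rcases Nat.eq_zero_or_pos (n x) with h | h
      · rw [h, Nat.cast_zero, zero_pow two_ne_zero]
        positivity
      · have hN1 : (1 : ℝ) ≤ N := by exact_mod_cast h.trans_le (hN x)
        exact hnx.trans (le_mul_of_one_le_right (by positivity) (one_le_pow₀ hN1))
    calc (n x : ℝ) ^ 2 * (N ^ (2 * s.card) * S + C x) * ‖A‖
        = ((n x : ℝ) ^ 2 * N ^ (2 * s.card) * S + (n x : ℝ) ^ 2 * C x) * ‖A‖ := by ring
      _ ≤ (N ^ 2 * N ^ (2 * s.card) * S + N ^ 2 * N ^ (2 * s.card) * C x) * ‖A‖ := by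
        gcongr
        exact hC₀ x
      _ = N ^ (2 * (insert x s).card) * ‖A‖ * ∑ y ∈ insert x s, C y := by
        rw [Finset.card_insert_of_notMem hx, Finset.sum_insert hx]
        ring

end Locality

variable [MetricSpace V]

lemma CB_nonneg (Φ : Interaction V n) (B : LROp n) (x : V) (t : ℝ) : 0 ≤ CB Φ B x t :=
  Real.iSup_nonneg fun _ => div_nonneg (norm_nonneg _) (norm_nonneg _)

lemma norm_commutator_le_CB_mul (Φ : Interaction V n) (B : LROp n) {x : V} (t : ℝ) {U : LROp n}
    (hU : SupportedOn {x} U) : ‖Φ.evol t U * B - B * Φ.evol t U‖ ≤ CB Φ B x t * ‖U‖ := by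
  rcases eq_or_ne U 0 with rfl | hU₀
  · simp [Interaction.evol]
  have hbdd : BddAbove (Set.range fun A : {A : LROp n // SupportedOn {x} A ∧ A ≠ 0} =>
      ‖Φ.evol t A.1 * B - B * Φ.evol t A.1‖ / ‖A.1‖) := by
    refine ⟨2 * ‖B‖, ?_⟩
    rintro _ ⟨A, rfl⟩
    refine div_le_of_le_mul₀ (norm_nonneg _) (by positivity) ?_
    calc _ ≤ 2 * ‖Φ.evol t A.1‖ * ‖B‖ := norm_mul_sub_mul_le _ _
      _ = 2 * ‖B‖ * ‖A.1‖ := by rw [Interaction.norm_evol]; ring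
  rw [← div_le_iff₀ (norm_pos_iff.mpr hU₀)]
  exact le_ciSup hbdd ⟨U, hU, hU₀⟩

end LiebRobinson

end

open scoped Classical in
theorem commutator_bound_of_supported_general
    {V : Type} [Fintype V] [DecidableEq V] [MetricSpace V] {n : V → ℕ}
    (N : ℕ) (hN : ∀ x : V, n x ≤ N)
    (Φ : Interaction V n) (X : Set V) (A B : LROp n) (hA : SupportedOn X A) (t : ℝ) :
    ‖Φ.evol t A * B - B * Φ.evol t A‖ ≤
      (N : ℝ) ^ (2 * X.ncard) * ‖A‖ *
        ∑ x ∈ Finset.univ.filter (fun x : V => x ∈ X), CB Φ B x t := by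
  have key := LiebRobinson.norm_commutator_le_of_supportedOn
    (Unitary.conjStarAlgAut ℂ (LROp n) (Φ.propagator t)) B (CB Φ B · t)
    (fun A => by rw [← Interaction.evol_eq_conjStarAlgAut, Interaction.norm_evol])
    (LiebRobinson.CB_nonneg Φ B · t)
    (fun x U hU => by
      simpa only [← Interaction.evol_eq_conjStarAlgAut] using
        LiebRobinson.norm_commutator_le_CB_mul Φ B t hU)
    hN X.toFinset (A := A) (by rwa [Set.coe_toFinset])
  simp_rw [← Interaction.evol_eq_conjStarAlgAut] at key
  rwa [Set.ncard_eq_toFinset_card', Set.filter_mem_univ_eq_toFinset]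

open scoped Classical in
/-- For `A ∈ 𝒜_X`: `‖[τ_t(A), B]‖ ≤ N^{2|X|} ‖A‖ ∑_{x ∈ X} C_B(x,t)`. -/
theorem commutator_bound_of_supported
    {V : Type} [Fintype V] [DecidableEq V] [MetricSpace V] {n : V → ℕ}
    (N : ℕ) (hN : ∀ x : V, n x ≤ N)
    (lam : ℝ) (hlam : 0 < lam)
    (Φ : Interaction V n) (X : Set V) (A B : LROp n) (hA : SupportedOn X A) (t : ℝ) :
    ‖Φ.evol t A * B - B * Φ.evol t A‖ ≤
      (N : ℝ) ^ (2 * X.ncard) * ‖A‖ *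
        ∑ x ∈ Finset.univ.filter (fun x : V => x ∈ X), CB Φ B x t :=
  commutator_bound_of_supported_general N hN Φ X A B hA t
end
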